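/- arXiv:1508.04568 — 4 statements merged into one kernel-verified Lean document; each statement's English description precedes it below -/
import Mathlib

section
/- Let (V,ω) be a symplectic vector space, W ⊆ V a coisotropic subspace, and ρ : W → W/W^ω the quotient (reduction) map onto the reduced symplectic vector space (W/W^ω, [ω]), where [ω]([u],[v]) = ω(u,v). If L ⊆ V is an isotropic subspace, then ρ(L ∩ W) is an isotropic subspace of (W/W^ω, [ω]); if L is coisotropic, then ρ(L ∩ W) is coisotropic; in particular, if L is lagrangian, then ρ(L ∩ W) is lagrangian. -/
/-!
The reduced form pulls back along `ρ` to `ω`, so `ρ x` is `[ω]`-orthogonal to `ρ(L ∩ W)` exactly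
when `x ∈ (L ∩ W)^ω`. Isotropy of `ρ(L ∩ W)` follows from `L ⊆ L^ω ⊆ (L ∩ W)^ω`. For
coisotropy, nondegeneracy in finite dimension gives `(L ∩ W)^ω = L^ω + W^ω ⊆ L + W^ω`, so
`x = l + w` with `l ∈ L`, `w ∈ W^ω ⊆ W`; then `l ∈ L ∩ W` and `ρ x = ρ l`.
-/

open Submodule Module

/-- The ω-orthogonal of a subspace: `W^ω = {v | ω(v,u) = 0 for all u ∈ W}`. -/
def oOrtho {V : Type*} [AddCommGroup V] [Module ℝ V]
    (ω : V →ₗ[ℝ] V →ₗ[ℝ] ℝ) (W : Submodule ℝ V) : Submodule ℝ V where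
  carrier := {v | ∀ u ∈ W, ω v u = 0}
  add_mem' := by
    intro a b ha hb u hu
    rw [Set.mem_setOf_eq] at *
    rw [map_add, LinearMap.add_apply, ha u hu, hb u hu, add_zero]
  zero_mem' := by intro u _; simp
  smul_mem' := by
    intro c a ha u hu
    rw [Set.mem_setOf_eq] at *
    rw [map_smul, LinearMap.smul_apply, ha u hu, smul_zero]

section Orthogonal

variable {V : Type*} [AddCommGroup V] [Module ℝ V] (ω : V →ₗ[ℝ] V →ₗ[ℝ] ℝ)

theorem oOrtho_anti {A B : Submodule ℝ V} (h : A ≤ B) : oOrtho ω B ≤ oOrtho ω A :=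
  fun _ hv u hu => hv u (h hu)

theorem oOrtho_sup (A B : Submodule ℝ V) : oOrtho ω (A ⊔ B) = oOrtho ω A ⊓ oOrtho ω B := by
  refine le_antisymm (le_inf (oOrtho_anti ω le_sup_left) (oOrtho_anti ω le_sup_right)) ?_
  rintro v ⟨hvA, hvB⟩ u hu
  obtain ⟨a, ha, b, hb, rfl⟩ := mem_sup.mp hu
  change ω v (a + b) = 0
  rw [map_add, hvA a ha, hvB b hb, add_zero]

theorem oOrtho_eq_orthogonal (hω : ω.IsRefl) (A : Submodule ℝ V) :
    oOrtho ω A = LinearMap.BilinForm.orthogonal ω A := by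
  ext v
  exact ⟨fun hv u hu => hω _ _ (hv u hu), fun hv u hu => hω _ _ (hv u hu)⟩

theorem oOrtho_oOrtho [FiniteDimensional ℝ V] (hω : ω.IsRefl) (hωnd : ω.Nondegenerate)
    (A : Submodule ℝ V) : oOrtho ω (oOrtho ω A) = A := by
  simp only [oOrtho_eq_orthogonal ω hω]
  exact LinearMap.BilinForm.orthogonal_orthogonal hωnd hω A

theorem oOrtho_inf [FiniteDimensional ℝ V] (hω : ω.IsRefl) (hωnd : ω.Nondegenerate)
    (A B : Submodule ℝ V) : oOrtho ω (A ⊓ B) = oOrtho ω A ⊔ oOrtho ω B := by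
  conv_lhs => rw [← oOrtho_oOrtho ω hω hωnd A, ← oOrtho_oOrtho ω hω hωnd B]
  rw [← oOrtho_sup, oOrtho_oOrtho ω hω hωnd]

end Orthogonal

section Reduction

variable {V : Type*} [AddCommGroup V] [Module ℝ V] (ω : V →ₗ[ℝ] V →ₗ[ℝ] ℝ) (W : Submodule ℝ V)

/-- `ρ(L ∩ W)`, where `ρ : W → W/W^ω` is the reduction map. -/
def reducedImage (L : Submodule ℝ V) : Submodule ℝ (W ⧸ (oOrtho ω W).comap W.subtype) :=
  map ((oOrtho ω W).comap W.subtype).mkQ ((L ⊓ W).comap W.subtype)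

variable {ω W}
variable {Ω : (W ⧸ (oOrtho ω W).comap W.subtype) →ₗ[ℝ]
    (W ⧸ (oOrtho ω W).comap W.subtype) →ₗ[ℝ] ℝ}

theorem mk_mem_oOrtho_reducedImage_iff
    (hΩ : ∀ u v : W, Ω (Submodule.Quotient.mk u) (Submodule.Quotient.mk v) = ω (u : V) (v : V))
    (L : Submodule ℝ V) (x : W) :
    Submodule.Quotient.mk x ∈ oOrtho Ω (reducedImage ω W L) ↔ (x : V) ∈ oOrtho ω (L ⊓ W) := by
  constructor
  · intro hx u hu
    simpa only [mkQ_apply, hΩ] using hx _ ⟨⟨u, hu.2⟩, mem_comap.mpr hu, rfl⟩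
  · rintro hx _ ⟨y, hy, rfl⟩
    rw [mkQ_apply, hΩ]
    exact hx y (mem_comap.mp hy)

theorem reducedImage_le_oOrtho
    (hΩ : ∀ u v : W, Ω (Submodule.Quotient.mk u) (Submodule.Quotient.mk v) = ω (u : V) (v : V))
    {L : Submodule ℝ V} (hL : L ≤ oOrtho ω L) :
    reducedImage ω W L ≤ oOrtho Ω (reducedImage ω W L) := by
  rintro _ ⟨x, hx, rfl⟩
  exact (mk_mem_oOrtho_reducedImage_iff hΩ L x).mpr
    (oOrtho_anti ω inf_le_left (hL (mem_comap.mp hx).1))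

theorem mk_mem_reducedImage_of_mem_sup (hW : oOrtho ω W ≤ W) {L : Submodule ℝ V} {x : W}
    (hx : (x : V) ∈ L ⊔ oOrtho ω W) : Submodule.Quotient.mk x ∈ reducedImage ω W L := by
  obtain ⟨l, hl, w, hw, hlw⟩ := mem_sup.mp hx
  have hlW : l ∈ W := by
    rw [← add_sub_cancel_right l w, hlw]
    exact W.sub_mem x.2 (hW hw)
  refine ⟨⟨l, hlW⟩, mem_comap.mpr ⟨hl, hlW⟩, (Submodule.Quotient.eq _).mpr ?_⟩
  have hdiff : l - (x : V) = -w := by rw [← hlw]; abel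
  simpa only [mem_comap, coe_subtype, AddSubgroupClass.coe_sub, hdiff] using neg_mem hw

theorem oOrtho_reducedImage_le [FiniteDimensional ℝ V] (hω : ω.IsRefl) (hωnd : ω.Nondegenerate)
    (hW : oOrtho ω W ≤ W)
    (hΩ : ∀ u v : W, Ω (Submodule.Quotient.mk u) (Submodule.Quotient.mk v) = ω (u : V) (v : V))
    {L : Submodule ℝ V} (hL : oOrtho ω L ≤ L) :
    oOrtho Ω (reducedImage ω W L) ≤ reducedImage ω W L := by
  intro q hq
  obtain ⟨x, rfl⟩ := mkQ_surjective _ q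
  have hx : (x : V) ∈ oOrtho ω (L ⊓ W) := (mk_mem_oOrtho_reducedImage_iff hΩ L x).mp hq
  rw [oOrtho_inf ω hω hωnd] at hx
  exact mk_mem_reducedImage_of_mem_sup hW (sup_le_sup_right hL _ hx)

end Reduction

/-- coisotropic reduction maps (co)isotropic subspaces to (co)isotropic
subspaces: if `W` is coisotropic with reduction map `ρ : W → W/W^ω` and reduced form
`[ω]`, and `L` is isotropic (resp. coisotropic, lagrangian), then `ρ(L ∩ W)` is
isotropic (resp. coisotropic, lagrangian) in `(W/W^ω, [ω])`. -/
theorem stmt7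
    {V : Type*} [AddCommGroup V] [Module ℝ V] [FiniteDimensional ℝ V]
    (ω : V →ₗ[ℝ] V →ₗ[ℝ] ℝ) (hωalt : ω.IsAlt) (hωnd : ω.Nondegenerate)
    (W : Submodule ℝ V) (hW : oOrtho ω W ≤ W)
    (Ω : (W ⧸ (oOrtho ω W).comap W.subtype) →ₗ[ℝ]
         (W ⧸ (oOrtho ω W).comap W.subtype) →ₗ[ℝ] ℝ)
    (hΩ : ∀ u v : W, Ω (Submodule.Quotient.mk u) (Submodule.Quotient.mk v) = ω (u : V) (v : V))
    (L : Submodule ℝ V) :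
    -- the image ρ(L ∩ W) in the reduced space
    (L ≤ oOrtho ω L →
      Submodule.map ((oOrtho ω W).comap W.subtype).mkQ ((L ⊓ W).comap W.subtype) ≤
        oOrtho Ω (Submodule.map ((oOrtho ω W).comap W.subtype).mkQ ((L ⊓ W).comap W.subtype))) ∧
    (oOrtho ω L ≤ L →
      oOrtho Ω (Submodule.map ((oOrtho ω W).comap W.subtype).mkQ ((L ⊓ W).comap W.subtype)) ≤
        Submodule.map ((oOrtho ω W).comap W.subtype).mkQ ((L ⊓ W).comap W.subtype)) ∧
    (L = oOrtho ω L →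
      Submodule.map ((oOrtho ω W).comap W.subtype).mkQ ((L ⊓ W).comap W.subtype) =
        oOrtho Ω (Submodule.map ((oOrtho ω W).comap W.subtype).mkQ ((L ⊓ W).comap W.subtype))) := by
  have isotropic := reducedImage_le_oOrtho hΩ (L := L)
  have coisotropic := oOrtho_reducedImage_le hωalt.isRefl hωnd hW hΩ (L := L)
  exact ⟨isotropic, coisotropic, fun hL => le_antisymm (isotropic hL.le) (coisotropic hL.ge)⟩
end

section
/- Let (V,ω) be a symplectic vector space, L ⊆ V × V a linear canonical relation from V to itself, and A = dom(L) = {v ∈ V : ∃ w, (v,w) ∈ L} its domain. Then for every v ∈ V one has v ∈ A^ω if and only if (v,0) ∈ L. -/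
open Submodule Module

/-- The symplectic form `ω̄((v,v'),(u,u')) = ω(v,u) − ω(v',u')` on `V × V`. -/
def prodForm {X Y : Type*} [AddCommGroup X] [Module ℝ X] [AddCommGroup Y] [Module ℝ Y]
    (ωX : X →ₗ[ℝ] X →ₗ[ℝ] ℝ) (ωY : Y →ₗ[ℝ] Y →ₗ[ℝ] ℝ) :
    (X × Y) →ₗ[ℝ] (X × Y) →ₗ[ℝ] ℝ :=
  LinearMap.mk₂ ℝ (fun p q => ωX p.1 q.1 - ωY p.2 q.2)
    (by intro m₁ m₂ n; simp [map_add, LinearMap.add_apply]; ring)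
    (by intro c m n; simp [map_smul, LinearMap.smul_apply, smul_eq_mul]; ring)
    (by intro m n₁ n₂; simp [map_add, LinearMap.add_apply]; ring)
    (by intro c m n; simp [map_smul, LinearMap.smul_apply, smul_eq_mul]; ring)

theorem prodForm_apply {X Y : Type*} [AddCommGroup X] [Module ℝ X] [AddCommGroup Y] [Module ℝ Y]
    (ωX : X →ₗ[ℝ] X →ₗ[ℝ] ℝ) (ωY : Y →ₗ[ℝ] Y →ₗ[ℝ] ℝ) (p q : X × Y) :
    prodForm ωX ωY p q = ωX p.1 q.1 - ωY p.2 q.2 :=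
  rfl

theorem mk_zero_mem_oOrtho_prodForm_iff {X Y : Type*} [AddCommGroup X] [Module ℝ X]
    [AddCommGroup Y] [Module ℝ Y] (ωX : X →ₗ[ℝ] X →ₗ[ℝ] ℝ) (ωY : Y →ₗ[ℝ] Y →ₗ[ℝ] ℝ)
    (L : Submodule ℝ (X × Y)) (v : X) :
    (v, (0 : Y)) ∈ oOrtho (prodForm ωX ωY) L ↔ v ∈ oOrtho ωX (L.map (LinearMap.fst ℝ X Y)) := by
  constructor
  · rintro hv _ ⟨p, hp, rfl⟩
    simpa [prodForm_apply] using hv p hp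
  · intro hv p hp
    simpa [prodForm_apply] using hv p.1 ⟨p, hp, rfl⟩

theorem stmt11_general
    {V : Type*} [AddCommGroup V] [Module ℝ V]
    (ω : V →ₗ[ℝ] V →ₗ[ℝ] ℝ)
    (L : Submodule ℝ (V × V)) (hL : L = oOrtho (prodForm ω ω) L) :
    ∀ v : V, v ∈ oOrtho ω (Submodule.map (LinearMap.fst ℝ V V) L) ↔ (v, (0 : V)) ∈ L := by
  intro v
  rw [← mk_zero_mem_oOrtho_prodForm_iff, ← hL]

/-- if `L ⊆ V × V` is a linear canonical relation with domain `A`, then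
`v ∈ A^ω ↔ (v,0) ∈ L`. -/
theorem stmt11
    {V : Type*} [AddCommGroup V] [Module ℝ V] [FiniteDimensional ℝ V]
    (ω : V →ₗ[ℝ] V →ₗ[ℝ] ℝ) (hωalt : ω.IsAlt) (hωnd : ω.Nondegenerate)
    (L : Submodule ℝ (V × V)) (hL : L = oOrtho (prodForm ω ω) L) :
    ∀ v : V, v ∈ oOrtho ω (Submodule.map (LinearMap.fst ℝ V V) L) ↔ (v, (0 : V)) ∈ L :=
  stmt11_general ω L hL
end

section
/- Let (V,ω) be a symplectic vector space and L ⊆ V × V a linear canonical relation from V to itself with domain A = {v : ∃ w, (v,w) ∈ L} and range B = {w : ∃ v, (v,w) ∈ L}. Then dim(A^ω) = dim(B^ω) and dim A = dim B. -/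
open Submodule Module

/-!
Rank–nullity for the projection `L → V` onto the first factor gives
`dim L = dim A + dim {w | (0, w) ∈ L}`, and since `L` is its own `ω̄`-orthogonal,
`(0, w) ∈ L` exactly when `w ∈ B^ω`; so `dim L = dim A + dim B^ω`, and symmetrically
`dim L = dim B + dim A^ω`. As `ω` is nondegenerate, `dim W^ω = dim V - dim W`, and the two
identities force `dim A = dim B`, hence also `dim A^ω = dim B^ω`.
-/

open LinearMap in
theorem Submodule.finrank_map_add_finrank_inf_ker {K M N : Type*} [DivisionRing K]
    [AddCommGroup M] [Module K M] [AddCommGroup N] [Module K N] [FiniteDimensional K M]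
    (f : M →ₗ[K] N) (L : Submodule K M) :
    finrank K (L.map f) + finrank K ↥(L ⊓ ker f) = finrank K L := by
  have hker : finrank K (ker (f.domRestrict L)) = finrank K ↥(L ⊓ ker f) := by
    rw [ker_domRestrict, ← finrank_map_subtype_eq, map_comap_eq, range_subtype]
  rw [← hker, ← range_domRestrict, finrank_range_add_finrank_ker]

open LinearMap in
theorem Submodule.finrank_map_add_finrank_comap_of_range_eq_ker {K M N P : Type*}
    [DivisionRing K] [AddCommGroup M] [Module K M] [AddCommGroup N] [Module K N]
    [AddCommGroup P] [Module K P] [FiniteDimensional K M]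
    (f : M →ₗ[K] N) (g : P →ₗ[K] M) (hg : Function.Injective g) (hgf : range g = ker f)
    (L : Submodule K M) :
    finrank K (L.map f) + finrank K (L.comap g) = finrank K L := by
  have : finrank K (L.comap g) = finrank K ↥(L ⊓ ker f) := by
    rw [(equivMapOfInjective g hg _).finrank_eq, map_comap_eq, hgf, inf_comm]
  rw [this, finrank_map_add_finrank_inf_ker]

section Symplectic

variable {X Y : Type*} [AddCommGroup X] [Module ℝ X] [AddCommGroup Y] [Module ℝ Y]
  (ωX : X →ₗ[ℝ] X →ₗ[ℝ] ℝ) (ωY : Y →ₗ[ℝ] Y →ₗ[ℝ] ℝ)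

-- `oOrtho ω W` unfolds to `LinearMap.BilinForm.orthogonal ω.flip W`.
theorem finrank_oOrtho [FiniteDimensional ℝ X] (hω : ωX.Nondegenerate) (W : Submodule ℝ X) :
    finrank ℝ (oOrtho ωX W) = finrank ℝ X - finrank ℝ W :=
  LinearMap.BilinForm.finrank_orthogonal (B := ωX.flip) (LinearMap.flip_nondegenerate.2 hω) W

theorem comap_inl_oOrtho_prodForm (L : Submodule ℝ (X × Y)) :
    (oOrtho (prodForm ωX ωY) L).comap (LinearMap.inl ℝ X Y) =
      oOrtho ωX (L.map (LinearMap.fst ℝ X Y)) := by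
  ext v
  simp [oOrtho, prodForm]

theorem comap_inr_oOrtho_prodForm (L : Submodule ℝ (X × Y)) :
    (oOrtho (prodForm ωX ωY) L).comap (LinearMap.inr ℝ X Y) =
      oOrtho ωY (L.map (LinearMap.snd ℝ X Y)) := by
  ext w
  simpa [oOrtho, prodForm] using forall_comm

variable [FiniteDimensional ℝ X] [FiniteDimensional ℝ Y] {L : Submodule ℝ (X × Y)}

theorem finrank_map_fst_add_finrank_oOrtho_map_snd (hL : L = oOrtho (prodForm ωX ωY) L) :
    finrank ℝ (L.map (LinearMap.fst ℝ X Y)) +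
        finrank ℝ (oOrtho ωY (L.map (LinearMap.snd ℝ X Y))) =
      finrank ℝ L := by
  rw [← comap_inr_oOrtho_prodForm ωX, ← hL]
  exact L.finrank_map_add_finrank_comap_of_range_eq_ker _ _ LinearMap.inr_injective
    (LinearMap.range_inr ℝ X Y)

theorem finrank_map_snd_add_finrank_oOrtho_map_fst (hL : L = oOrtho (prodForm ωX ωY) L) :
    finrank ℝ (L.map (LinearMap.snd ℝ X Y)) +
        finrank ℝ (oOrtho ωX (L.map (LinearMap.fst ℝ X Y))) =
      finrank ℝ L := by
  rw [← comap_inl_oOrtho_prodForm ωX ωY, ← hL]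
  exact L.finrank_map_add_finrank_comap_of_range_eq_ker _ _ LinearMap.inl_injective
    (LinearMap.range_inl ℝ X Y)

end Symplectic

theorem stmt14_general
    {V : Type*} [AddCommGroup V] [Module ℝ V] [FiniteDimensional ℝ V]
    (ω : V →ₗ[ℝ] V →ₗ[ℝ] ℝ) (hωnd : ω.Nondegenerate)
    (L : Submodule ℝ (V × V)) (hL : L = oOrtho (prodForm ω ω) L) :
    Module.finrank ℝ (oOrtho ω (Submodule.map (LinearMap.fst ℝ V V) L)) =
      Module.finrank ℝ (oOrtho ω (Submodule.map (LinearMap.snd ℝ V V) L)) ∧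
    Module.finrank ℝ (Submodule.map (LinearMap.fst ℝ V V) L) =
      Module.finrank ℝ (Submodule.map (LinearMap.snd ℝ V V) L) := by
  have hAB := finrank_map_fst_add_finrank_oOrtho_map_snd ω ω hL
  have hBA := finrank_map_snd_add_finrank_oOrtho_map_fst ω ω hL
  have hA := finrank_oOrtho ω hωnd (L.map (LinearMap.fst ℝ V V))
  have hB := finrank_oOrtho ω hωnd (L.map (LinearMap.snd ℝ V V))
  have := (L.map (LinearMap.fst ℝ V V)).finrank_le
  have := (L.map (LinearMap.snd ℝ V V)).finrank_le
  omega

/-- for a linear canonical relation `L ⊆ V × V` with domain `A` and range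
`B`, one has `dim A^ω = dim B^ω` and `dim A = dim B`. -/
theorem stmt14
    {V : Type*} [AddCommGroup V] [Module ℝ V] [FiniteDimensional ℝ V]
    (ω : V →ₗ[ℝ] V →ₗ[ℝ] ℝ) (hωalt : ω.IsAlt) (hωnd : ω.Nondegenerate)
    (L : Submodule ℝ (V × V)) (hL : L = oOrtho (prodForm ω ω) L) :
    Module.finrank ℝ (oOrtho ω (Submodule.map (LinearMap.fst ℝ V V) L)) =
      Module.finrank ℝ (oOrtho ω (Submodule.map (LinearMap.snd ℝ V V) L)) ∧
    Module.finrank ℝ (Submodule.map (LinearMap.fst ℝ V V) L) =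
      Module.finrank ℝ (Submodule.map (LinearMap.snd ℝ V V) L) :=
  stmt14_general ω hωnd L hL
end

section
/- Let (A,B) be a coisotropic pair in a symplectic vector space (V,ω) which is of one of the five elementary types λ, δ, σ, μ_B, μ_A. Suppose (A,B) = ⊕ᵢ₌₁ᵐ (Aᵢ,Bᵢ) is a direct sum decomposition of (A,B) subordinate to an ω-orthogonal decomposition V = ⊕ᵢ₌₁ᵐ Vᵢ into symplectic subspaces, where each (Aᵢ,Bᵢ) is a coisotropic pair in (Vᵢ, ω|_{Vᵢ}). Then every summand pair (Aᵢ,Bᵢ) is of the same elementary type as (A,B). -/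
open Submodule Module

/-- `X` is a lagrangian subspace of the symplectic subspace `U` (w.r.t. the restricted
form): `X` equals its orthogonal taken inside `U`. -/
def IsLagrangianIn {V : Type*} [AddCommGroup V] [Module ℝ V]
    (ω : V →ₗ[ℝ] V →ₗ[ℝ] ℝ) (U X : Submodule ℝ V) : Prop :=
  X ≤ U ∧ X = oOrtho ω X ⊓ U

/-- The five elementary types of coisotropic pairs. -/
inductive ElemType | lam | delta | sigma | muB | muA

/-- The coisotropic pair `(A,B)` in the symplectic subspace `U` is of the given
elementary type. -/
def IsOfTypeIn {V : Type*} [AddCommGroup V] [Module ℝ V]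
    (ω : V →ₗ[ℝ] V →ₗ[ℝ] ℝ) (U A B : Submodule ℝ V) : ElemType → Prop
  | .lam => IsLagrangianIn ω U A ∧ IsLagrangianIn ω U B ∧ A = B
  | .delta => IsLagrangianIn ω U A ∧ IsLagrangianIn ω U B ∧ A ⊓ B = ⊥
  | .sigma => A = U ∧ B = U
  | .muB => B = U ∧ IsLagrangianIn ω U A
  | .muA => A = U ∧ IsLagrangianIn ω U B

/-! Intersecting with `Vᵢ` recovers each summand: by independence and the modular law,
`(⨆ⱼ Aⱼ) ⊓ Vᵢ = Aᵢ`. Since the `Vⱼ` are mutually ω-orthogonal, also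
`(⨆ⱼ Aⱼ)^ω ⊓ Vᵢ = Aᵢ^ω ⊓ Vᵢ`, so intersecting `A = A^ω` with `Vᵢ` shows that `Aᵢ` is lagrangian
in `Vᵢ`. The conditions `A = V`, `A = B` and `A ⊓ B = ⊥` pass to the summands in the same way. -/

namespace iSupIndep

variable {α ι : Type*} [CompleteLattice α] [IsModularLattice α] {t a : ι → α}

theorem iSup_inf_eq (ht : iSupIndep t) (hat : ∀ j, a j ≤ t j) (i : ι) :
    (⨆ j, a j) ⊓ t i = a i := by
  have hsplit : ⨆ j, a j ≤ a i ⊔ ⨆ (j) (_ : j ≠ i), t j := by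
    refine iSup_le fun j => ?_
    rcases eq_or_ne j i with rfl | hji
    · exact le_sup_left
    · exact le_sup_of_le_right (le_biSup t hji |>.trans' (hat j))
  refine le_antisymm ?_ (le_inf (le_iSup a i) (hat i))
  calc (⨆ j, a j) ⊓ t i
      ≤ (a i ⊔ ⨆ (j) (_ : j ≠ i), t j) ⊓ t i := inf_le_inf_right _ hsplit
    _ = a i ⊔ (⨆ (j) (_ : j ≠ i), t j) ⊓ t i := sup_inf_assoc_of_le _ (hat i)
    _ = a i := by rw [(ht i).symm.eq_bot, sup_bot_eq]

theorem eq_of_iSup_eq_top (ht : iSupIndep t) (hat : ∀ j, a j ≤ t j) (htop : ⨆ j, a j = ⊤)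
    (i : ι) : a i = t i := by
  rw [← ht.iSup_inf_eq hat i, htop, top_inf_eq]

end iSupIndep

section Ortho

variable {V : Type*} [AddCommGroup V] [Module ℝ V] (ω : V →ₗ[ℝ] V →ₗ[ℝ] ℝ)

theorem oOrtho_iSup {ι : Type*} (W : ι → Submodule ℝ V) :
    oOrtho ω (⨆ j, W j) = ⨅ j, oOrtho ω (W j) := by
  ext v
  simp only [mem_iInf]
  refine ⟨fun h j w hw => h w (mem_iSup_of_mem j hw), fun h w hw => ?_⟩
  refine iSup_induction (motive := fun w => ω v w = 0) W hw (fun j w hw => h j w hw) (by simp) ?_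
  intro x y hx hy
  rw [map_add, hx, hy, add_zero]

variable {ι : Type*} {Vs As : ι → Submodule ℝ V}
  (hVorth : ∀ i j, i ≠ j → ∀ v ∈ Vs i, ∀ u ∈ Vs j, ω v u = 0) (hAle : ∀ i, As i ≤ Vs i)
include hVorth hAle

theorem oOrtho_iSup_inf_eq (i : ι) : oOrtho ω (⨆ j, As j) ⊓ Vs i = oOrtho ω (As i) ⊓ Vs i := by
  refine le_antisymm (inf_le_inf_right _ (oOrtho_iSup ω As ▸ iInf_le _ i)) ?_
  refine le_inf ?_ inf_le_right
  rw [oOrtho_iSup, le_iInf_iff]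
  intro j
  rcases eq_or_ne i j with rfl | hij
  · exact inf_le_left
  · exact fun v hv u hu => hVorth i j hij v hv.2 u (hAle j hu)

theorem isLagrangianIn_of_isLagrangianIn_top_iSup (hVindep : iSupIndep Vs)
    (hL : IsLagrangianIn ω ⊤ (⨆ j, As j)) (i : ι) : IsLagrangianIn ω (Vs i) (As i) := by
  refine ⟨hAle i, ?_⟩
  calc As i = (⨆ j, As j) ⊓ Vs i := (hVindep.iSup_inf_eq hAle i).symm
    _ = oOrtho ω (⨆ j, As j) ⊓ Vs i := by rw [← inf_top_eq (oOrtho ω _), ← hL.2]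
    _ = oOrtho ω (As i) ⊓ Vs i := oOrtho_iSup_inf_eq ω hVorth hAle i

end Ortho

theorem stmt17_general
    {V : Type*} [AddCommGroup V] [Module ℝ V]
    (ω : V →ₗ[ℝ] V →ₗ[ℝ] ℝ)
    (m : ℕ) (Vs As Bs : Fin m → Submodule ℝ V)
    -- V = ⊕ᵢ Vᵢ is an ω-orthogonal decomposition into symplectic subspaces
    (hVindep : iSupIndep Vs)
    (hVorth : ∀ i j, i ≠ j → ∀ v ∈ Vs i, ∀ u ∈ Vs j, ω v u = 0)
    -- each (Aᵢ,Bᵢ) is a coisotropic pair in (Vᵢ, ω|_{Vᵢ})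
    (hAle : ∀ i, As i ≤ Vs i) (hBle : ∀ i, Bs i ≤ Vs i)
    -- (A,B) is the direct sum of the pairs (Aᵢ,Bᵢ)
    (A B : Submodule ℝ V) (hA : A = ⨆ i, As i) (hB : B = ⨆ i, Bs i)
    -- (A,B) is a coisotropic pair in V of elementary type τ
    (τ : ElemType) (hτ : IsOfTypeIn ω ⊤ A B τ) :
    ∀ i, IsOfTypeIn ω (Vs i) (As i) (Bs i) τ := by
  subst hA hB
  intro i
  have lagA := isLagrangianIn_of_isLagrangianIn_top_iSup ω hVorth hAle hVindep
  have lagB := isLagrangianIn_of_isLagrangianIn_top_iSup ω hVorth hBle hVindep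
  cases τ with
  | lam =>
    obtain ⟨hLA, hLB, hAB⟩ := hτ
    refine ⟨lagA hLA i, lagB hLB i, ?_⟩
    rw [← hVindep.iSup_inf_eq hAle i, ← hVindep.iSup_inf_eq hBle i, hAB]
  | delta =>
    obtain ⟨hLA, hLB, hAB⟩ := hτ
    exact ⟨lagA hLA i, lagB hLB i,
      eq_bot_iff.2 (hAB ▸ inf_le_inf (le_iSup As i) (le_iSup Bs i))⟩
  | sigma =>
    obtain ⟨hA, hB⟩ := hτ
    exact ⟨hVindep.eq_of_iSup_eq_top hAle hA i, hVindep.eq_of_iSup_eq_top hBle hB i⟩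
  | muB =>
    obtain ⟨hB, hLA⟩ := hτ
    exact ⟨hVindep.eq_of_iSup_eq_top hBle hB i, lagA hLA i⟩
  | muA =>
    obtain ⟨hA, hLB⟩ := hτ
    exact ⟨hVindep.eq_of_iSup_eq_top hAle hA i, lagB hLB i⟩

/-- if a coisotropic pair `(A,B)` of elementary type `τ` decomposes as a
direct sum of coisotropic pairs `(Aᵢ,Bᵢ)` subordinate to an ω-orthogonal decomposition
`V = ⊕ᵢ Vᵢ` into symplectic subspaces, then every `(Aᵢ,Bᵢ)` is of type `τ` in `Vᵢ`. -/
theorem stmt17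
    {V : Type*} [AddCommGroup V] [Module ℝ V] [FiniteDimensional ℝ V]
    (ω : V →ₗ[ℝ] V →ₗ[ℝ] ℝ) (hωalt : ω.IsAlt) (hωnd : ω.Nondegenerate)
    (m : ℕ) (Vs As Bs : Fin m → Submodule ℝ V)
    -- V = ⊕ᵢ Vᵢ is an ω-orthogonal decomposition into symplectic subspaces
    (hVindep : iSupIndep Vs) (hVsup : ⨆ i, Vs i = ⊤)
    (hVorth : ∀ i j, i ≠ j → ∀ v ∈ Vs i, ∀ u ∈ Vs j, ω v u = 0)
    (hVsympl : ∀ i, Vs i ⊓ oOrtho ω (Vs i) = ⊥)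
    -- each (Aᵢ,Bᵢ) is a coisotropic pair in (Vᵢ, ω|_{Vᵢ})
    (hAle : ∀ i, As i ≤ Vs i) (hBle : ∀ i, Bs i ≤ Vs i)
    (hAco : ∀ i, oOrtho ω (As i) ⊓ Vs i ≤ As i)
    (hBco : ∀ i, oOrtho ω (Bs i) ⊓ Vs i ≤ Bs i)
    -- (A,B) is the direct sum of the pairs (Aᵢ,Bᵢ)
    (A B : Submodule ℝ V) (hA : A = ⨆ i, As i) (hB : B = ⨆ i, Bs i)
    -- (A,B) is a coisotropic pair in V of elementary type τ
    (hAcoV : oOrtho ω A ≤ A) (hBcoV : oOrtho ω B ≤ B)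
    (τ : ElemType) (hτ : IsOfTypeIn ω ⊤ A B τ) :
    ∀ i, IsOfTypeIn ω (Vs i) (As i) (Bs i) τ :=
  stmt17_general ω m Vs As Bs hVindep hVorth hAle hBle A B hA hB τ hτ
end
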